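/- Let f : ℝⁿ → ℝ be differentiable and L-smooth, with nonempty solution set X* and minimum value f*. Suppose f satisfies the quadratic growth condition with constant μ > 0 and is α-weakly-quasi-convex with respect to P(x) for every x ∈ ℝⁿ, for some α ∈ (0,1]. Set T = ⌈(4/(3α))·√(L/μ)⌉ and let (y_m) be the sequence of restarts obtained by running T iterations of Nemirovski's conjugate gradients method starting from y_{m−1} to produce y_m, with y_0 = x_0. Then for every natural number m, f(y_m) − f* ≤ (3/4)^m · (f(x_0) − f*); in particular, for any ε > 0, an accuracy of f(y) − f* ≤ ε·(f(x_0) − f*) is reached after at most ⌈log_{4/3}(1/ε)⌉ cycles of T iterations each. -/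

import Mathlib

open scoped RealInnerProductSpace

/-!
Within one cycle, minimality of `x̂ₖ` on `z₀ + span {zₖ - z₀, qₖ}` makes `∇f(x̂ₖ)` orthogonal to
`qₖ` and to `x̂ₖ - z₀`. Hence `q_T = ∑ ∇f(x̂ᵢ)` has `‖q_T‖² = ∑ ‖∇f(x̂ᵢ)‖² ≤ 2L (f(z₀) - f(z_T))` by
the descent lemma, while weak quasi-convexity with respect to `x* = P(z₀)` gives
`α T (f(z_T) - f*) ≤ ⟪q_T, z₀ - x*⟫ ≤ ‖q_T‖ ‖z₀ - x*‖`. Squaring and bounding `‖z₀ - x*‖²` by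
quadratic growth, `A = f(z₀) - f*` and `B = f(z_T) - f*` satisfy `4B² ≤ 9A(A - B)` as soon as
`αT ≥ (4/3)√(L/μ)`, that is `B ≤ 3A/4`. The restarts iterate this contraction.
-/

variable {E : Type*} [NormedAddCommGroup E] [InnerProductSpace ℝ E] [CompleteSpace E]
  {f : E → ℝ} {L : ℝ}

theorem hasDerivAt_comp_add_smul {c v : E} {t : ℝ} (hf : DifferentiableAt ℝ f (c + t • v)) :
    HasDerivAt (fun s : ℝ => f (c + s • v)) ⟪gradient f (c + t • v), v⟫ t := by
  have hline : HasDerivAt (fun s : ℝ => c + s • v) v t := by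
    simpa using ((hasDerivAt_id t).smul_const v).const_add c
  rw [inner_gradient_left]
  exact hf.hasFDerivAt.comp_hasDerivAt t hline

theorem inner_gradient_eq_zero_of_forall_le_add_smul {c v : E} (hf : DifferentiableAt ℝ f c)
    (hmin : ∀ t : ℝ, f c ≤ f (c + t • v)) : ⟪gradient f c, v⟫ = 0 := by
  have hloc : IsLocalMin (fun s : ℝ => f (c + s • v)) 0 :=
    IsMinOn.isLocalMin (fun t _ => by simpa using hmin t) Filter.univ_mem
  exact hloc.hasDerivAt_eq_zero
    (by simpa using hasDerivAt_comp_add_smul (c := c) (v := v) (t := 0) (by simpa using hf))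

theorem le_add_inner_gradient_add_sq (hf : Differentiable ℝ f)
    (hsmooth : ∀ x y : E, ‖gradient f y - gradient f x‖ ≤ L * ‖y - x‖) (x v : E) :
    f (x + v) ≤ f x + ⟪gradient f x, v⟫ + L / 2 * ‖v‖ ^ 2 := by
  have hg (t : ℝ) := hasDerivAt_comp_add_smul (c := x) (v := v) (hf (x + t • v))
  have hB (t : ℝ) : HasDerivAt (fun s : ℝ => f x + s * ⟪gradient f x, v⟫ + L / 2 * ‖v‖ ^ 2 * s ^ 2)
      (⟪gradient f x, v⟫ + L * ‖v‖ ^ 2 * t) t := by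
    have := (((hasDerivAt_id' t).mul_const ⟪gradient f x, v⟫).const_add (f x)).add
      ((hasDerivAt_pow 2 t).const_mul (L / 2 * ‖v‖ ^ 2))
    exact this.congr_deriv (by push_cast; ring)
  have hslope (t : ℝ) (ht : 0 ≤ t) :
      ⟪gradient f (x + t • v), v⟫ ≤ ⟪gradient f x, v⟫ + L * ‖v‖ ^ 2 * t := by
    have := calc ⟪gradient f (x + t • v) - gradient f x, v⟫
        ≤ ‖gradient f (x + t • v) - gradient f x‖ * ‖v‖ := real_inner_le_norm _ _
      _ ≤ L * ‖x + t • v - x‖ * ‖v‖ := by gcongr; exact hsmooth _ _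
      _ = L * ‖v‖ ^ 2 * t := by simp [norm_smul, abs_of_nonneg ht]; ring
    rw [inner_sub_left] at this
    linarith
  have hbound := image_le_of_deriv_right_le_deriv_boundary
    (fun t _ => (hg t).continuousAt.continuousWithinAt) (fun t _ => (hg t).hasDerivWithinAt)
    (by simp) (fun t _ => (hB t).continuousAt.continuousWithinAt)
    (fun t _ => (hB t).hasDerivWithinAt) (fun t ht => hslope t ht.1)
    (Set.right_mem_Icc.2 zero_le_one)
  simpa using hbound

theorem le_sub_of_gradient_step (hf : Differentiable ℝ f) (hL : 0 < L)
    (hsmooth : ∀ x y : E, ‖gradient f y - gradient f x‖ ≤ L * ‖y - x‖) (x : E) :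
    f (x - (1 / L) • gradient f x) ≤ f x - 1 / (2 * L) * ‖gradient f x‖ ^ 2 := by
  have h := le_add_inner_gradient_add_sq hf hsmooth x (-((1 / L) • gradient f x))
  rw [← sub_eq_add_neg, inner_neg_right, real_inner_smul_right, real_inner_self_eq_norm_sq,
    norm_neg, norm_smul, Real.norm_of_nonneg (by positivity)] at h
  calc _ ≤ _ := h
    _ = f x - 1 / (2 * L) * ‖gradient f x‖ ^ 2 := by field_simp; ring

theorem le_three_quarters_mul_of_sq_le {A B c κ : ℝ} (hA : 0 ≤ A) (hκ : 0 < κ)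
    (hc : 16 / 9 * κ ≤ c ^ 2) (h : (c * B) ^ 2 ≤ 4 * κ * A * (A - B)) : B ≤ 3 / 4 * A := by
  have hquad : 4 * B ^ 2 ≤ 9 * A * (A - B) := by
    have : 16 / 9 * κ * B ^ 2 ≤ 4 * κ * A * (A - B) := by
      nlinarith [mul_le_mul_of_nonneg_right hc (sq_nonneg B)]
    nlinarith
  -- `9 A (A - B) - 4 B² = (3 A - 4 B) (3 A + B)`
  nlinarith

theorem inv_pow_ceil_logb_le {b ε : ℝ} (hb : 1 < b) (hε : 0 < ε) :
    b⁻¹ ^ ⌈Real.logb b (1 / ε)⌉₊ ≤ ε := by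
  have hpow : 1 / ε ≤ b ^ ⌈Real.logb b (1 / ε)⌉₊ :=
    calc 1 / ε = b ^ Real.logb b (1 / ε) :=
          (Real.rpow_logb (by linarith) hb.ne' (by positivity)).symm
      _ ≤ b ^ (⌈Real.logb b (1 / ε)⌉₊ : ℝ) := Real.rpow_le_rpow_of_exponent_le hb.le (Nat.le_ceil _)
      _ = b ^ ⌈Real.logb b (1 / ε)⌉₊ := Real.rpow_natCast _ _
  rw [inv_pow, inv_le_comm₀ (by positivity) hε, ← one_div]
  exact hpow

structure NemirovskiCG (f : E → ℝ) (L : ℝ) (z q xhat : ℕ → E) : Prop where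
  q_zero : q 0 = 0
  xhat_mem : ∀ k, ∃ a b : ℝ, xhat k = z 0 + a • (z k - z 0) + b • q k
  xhat_min : ∀ (k : ℕ) (a b : ℝ), f (xhat k) ≤ f (z 0 + a • (z k - z 0) + b • q k)
  z_succ : ∀ k, z (k + 1) = xhat k - (1 / L) • gradient f (xhat k)
  q_succ : ∀ k, q (k + 1) = q k + gradient f (xhat k)

namespace NemirovskiCG

variable {z q xhat : ℕ → E} (h : NemirovskiCG f L z q xhat)
include h

theorem q_eq_sum (k : ℕ) : q k = ∑ i ∈ Finset.range k, gradient f (xhat i) := by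
  induction k with
  | zero => simp [h.q_zero]
  | succ k ih => rw [h.q_succ, ih, Finset.sum_range_succ]

theorem f_xhat_le (k : ℕ) : f (xhat k) ≤ f (z k) := by
  simpa using h.xhat_min k 1 0

section Differentiable

variable (hf : Differentiable ℝ f)
include hf

theorem inner_gradient_sub_start (k : ℕ) : ⟪gradient f (xhat k), z k - z 0⟫ = 0 := by
  obtain ⟨a, b, hab⟩ := h.xhat_mem k
  refine inner_gradient_eq_zero_of_forall_le_add_smul (hf _) fun t => ?_
  convert h.xhat_min k (a + t) b using 2
  rw [hab]; module

theorem inner_gradient_q (k : ℕ) : ⟪gradient f (xhat k), q k⟫ = 0 := by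
  obtain ⟨a, b, hab⟩ := h.xhat_mem k
  refine inner_gradient_eq_zero_of_forall_le_add_smul (hf _) fun t => ?_
  convert h.xhat_min k a (b + t) using 2
  rw [hab]; module

theorem inner_gradient_xhat_sub_start (k : ℕ) : ⟪gradient f (xhat k), xhat k - z 0⟫ = 0 := by
  obtain ⟨a, b, hab⟩ := h.xhat_mem k
  have hdir : xhat k - z 0 = a • (z k - z 0) + b • q k := by rw [hab]; abel
  rw [hdir, inner_add_right, real_inner_smul_right, real_inner_smul_right,
    h.inner_gradient_sub_start hf, h.inner_gradient_q hf, mul_zero, mul_zero, add_zero]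

theorem norm_q_sq (k : ℕ) :
    ‖q k‖ ^ 2 = ∑ i ∈ Finset.range k, ‖gradient f (xhat i)‖ ^ 2 := by
  induction k with
  | zero => simp [h.q_zero]
  | succ k ih =>
    rw [h.q_succ, Finset.sum_range_succ, ← ih, norm_add_sq_real, real_inner_comm,
      h.inner_gradient_q hf, mul_zero, add_zero]

variable (hL : 0 < L) (hsmooth : ∀ x y : E, ‖gradient f y - gradient f x‖ ≤ L * ‖y - x‖)
include hL hsmooth

theorem f_z_succ_le (k : ℕ) :
    f (z (k + 1)) ≤ f (xhat k) - 1 / (2 * L) * ‖gradient f (xhat k)‖ ^ 2 := by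
  rw [h.z_succ]
  exact le_sub_of_gradient_step hf hL hsmooth _

theorem f_z_succ_le_f_xhat (k : ℕ) : f (z (k + 1)) ≤ f (xhat k) := by
  have hstep := h.f_z_succ_le hf hL hsmooth k
  have : 0 ≤ 1 / (2 * L) * ‖gradient f (xhat k)‖ ^ 2 := by positivity
  linarith

theorem antitone_f_z : Antitone fun k => f (z k) :=
  antitone_nat_of_succ_le fun k => (h.f_z_succ_le_f_xhat hf hL hsmooth k).trans (h.f_xhat_le k)

theorem f_z_le_f_xhat {i T : ℕ} (hi : i < T) : f (z T) ≤ f (xhat i) :=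
  (h.antitone_f_z hf hL hsmooth hi).trans (h.f_z_succ_le_f_xhat hf hL hsmooth i)

theorem sum_norm_gradient_sq_le (k : ℕ) :
    ∑ i ∈ Finset.range k, ‖gradient f (xhat i)‖ ^ 2 ≤ 2 * L * (f (z 0) - f (z k)) := by
  induction k with
  | zero => simp
  | succ k ih =>
    have hstep := h.f_z_succ_le hf hL hsmooth k
    have hdecrease : ‖gradient f (xhat k)‖ ^ 2 ≤ 2 * L * (f (z k) - f (z (k + 1))) := by
      rw [one_div, mul_comm, ← div_eq_mul_inv] at hstep
      rw [← div_le_iff₀' (by positivity)]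
      linarith [h.f_xhat_le k]
    rw [Finset.sum_range_succ]
    linarith

theorem mul_sub_le_inner_q {fstar α : ℝ} (hα : 0 ≤ α) {xstar : E}
    (hwqc : ∀ x, α * (f x - fstar) ≤ ⟪gradient f x, x - xstar⟫) (T : ℕ) :
    α * T * (f (z T) - fstar) ≤ ⟪q T, z 0 - xstar⟫ := by
  have hterm (i : ℕ) (hi : i ∈ Finset.range T) :
      α * (f (z T) - fstar) ≤ ⟪gradient f (xhat i), z 0 - xstar⟫ := by
    have hwqc_i := hwqc (xhat i)
    rw [← sub_add_sub_cancel (xhat i) (z 0) xstar, inner_add_right,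
      h.inner_gradient_xhat_sub_start hf, zero_add] at hwqc_i
    refine le_trans ?_ hwqc_i
    gcongr
    exact h.f_z_le_f_xhat hf hL hsmooth (Finset.mem_range.1 hi)
  calc α * T * (f (z T) - fstar) = ∑ _i ∈ Finset.range T, α * (f (z T) - fstar) := by
        rw [Finset.sum_const, Finset.card_range, nsmul_eq_mul]; ring
    _ ≤ ∑ i ∈ Finset.range T, ⟪gradient f (xhat i), z 0 - xstar⟫ := Finset.sum_le_sum hterm
    _ = ⟪q T, z 0 - xstar⟫ := by rw [h.q_eq_sum, sum_inner]

theorem sub_le_three_quarters_mul {fstar μ α : ℝ} (hμ : 0 < μ) (hα : 0 < α)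
    (hlow : ∀ x, fstar ≤ f x) {xstar : E}
    (hwqc : ∀ x, α * (f x - fstar) ≤ ⟪gradient f x, x - xstar⟫)
    (hdist : f (z 0) - fstar ≥ μ / 2 * ‖z 0 - xstar‖ ^ 2) {T : ℕ}
    (hT : 4 / (3 * α) * √(L / μ) ≤ T) :
    f (z T) - fstar ≤ 3 / 4 * (f (z 0) - fstar) := by
  set A := f (z 0) - fstar
  set B := f (z T) - fstar
  have hB : 0 ≤ B := sub_nonneg.2 (hlow _)
  have hBA : B ≤ A := sub_le_sub_right (h.antitone_f_z hf hL hsmooth (Nat.zero_le T)) _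
  have hq : ‖q T‖ ^ 2 ≤ 2 * L * (A - B) := by
    rw [h.norm_q_sq hf, sub_sub_sub_cancel_right]
    exact h.sum_norm_gradient_sq_le hf hL hsmooth T
  have hR : ‖z 0 - xstar‖ ^ 2 ≤ 2 / μ * A := by
    rw [div_mul_eq_mul_div, le_div_iff₀ hμ]
    linarith
  have hαT : 16 / 9 * (L / μ) ≤ (α * T) ^ 2 :=
    calc 16 / 9 * (L / μ) = (4 / 3 * √(L / μ)) ^ 2 := by
          rw [mul_pow, Real.sq_sqrt (by positivity)]; norm_num
      _ = (α * (4 / (3 * α) * √(L / μ))) ^ 2 := by field_simp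
      _ ≤ (α * T) ^ 2 := by gcongr
  have hprod : (α * T * B) ^ 2 ≤ 4 * (L / μ) * A * (A - B) :=
    calc (α * T * B) ^ 2 ≤ (‖q T‖ * ‖z 0 - xstar‖) ^ 2 := by
          refine pow_le_pow_left₀ (by positivity) ?_ 2
          exact (h.mul_sub_le_inner_q hf hL hsmooth hα.le hwqc T).trans (real_inner_le_norm _ _)
      _ = ‖q T‖ ^ 2 * ‖z 0 - xstar‖ ^ 2 := mul_pow _ _ _
      _ ≤ 2 * L * (A - B) * (2 / μ * A) := by gcongr
      _ = 4 * (L / μ) * A * (A - B) := by field_simp; ring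
  exact le_three_quarters_mul_of_sq_le (hB.trans hBA) (div_pos hL hμ) hαT hprod

end Differentiable

end NemirovskiCG

theorem nemirovski_cg_restart_convergence_general
    (n : ℕ) (f : EuclideanSpace ℝ (Fin n) → ℝ)
    (hdiff : Differentiable ℝ f)
    (L : ℝ) (hL : 0 < L)
    (hsmooth : ∀ x y : EuclideanSpace ℝ (Fin n),
      ‖gradient f y - gradient f x‖ ≤ L * ‖y - x‖)
    (fstar : ℝ)
    -- P is the projection onto the solution set
    (P : EuclideanSpace ℝ (Fin n) → EuclideanSpace ℝ (Fin n))
    -- quadratic growth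
    (μ : ℝ) (hμ : 0 < μ)
    (hQG : ∀ x, f x - fstar ≥ μ / 2 * ‖x - P x‖ ^ 2)
    -- α-weak-quasi-convexity with respect to P x for every x
    (α : ℝ) (hα : α ∈ Set.Ioc (0 : ℝ) 1)
    (hwqc : ∀ x z : EuclideanSpace ℝ (Fin n),
      α * (f z - fstar) ≤ ⟪gradient f z, z - P x⟫)
    -- number of iterations per cycle
    (T : ℕ) (hT : T = ⌈(4 / (3 * α)) * Real.sqrt (L / μ)⌉₊)
    -- the sequence of restart points, y (m+1) obtained from y m by one
    -- cycle of T iterations of Nemirovski's conjugate gradients method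
    (x0 : EuclideanSpace ℝ (Fin n))
    (y : ℕ → EuclideanSpace ℝ (Fin n)) (hy0 : y 0 = x0)
    (z q xhat : ℕ → ℕ → EuclideanSpace ℝ (Fin n))
    (hz0 : ∀ m : ℕ, z m 0 = y m)
    (hq0 : ∀ m : ℕ, q m 0 = 0)
    (hhatmem : ∀ (m k : ℕ), ∃ a b : ℝ,
      xhat m k = z m 0 + a • (z m k - z m 0) + b • q m k)
    (hhatmin : ∀ (m k : ℕ) (a b : ℝ),
      f (xhat m k) ≤ f (z m 0 + a • (z m k - z m 0) + b • q m k))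
    (hstep : ∀ m k : ℕ, z m (k + 1) = xhat m k - (1 / L) • gradient f (xhat m k))
    (hqrec : ∀ m k : ℕ, q m (k + 1) = q m k + gradient f (xhat m k))
    (hrestart : ∀ m : ℕ, y (m + 1) = z m T) :
    (∀ m : ℕ, f (y m) - fstar ≤ (3 / 4) ^ m * (f x0 - fstar)) ∧
      ∀ ε : ℝ, 0 < ε →
        f (y ⌈Real.logb (4 / 3) (1 / ε)⌉₊) - fstar ≤ ε * (f x0 - fstar) := by
  have hlow (x : EuclideanSpace ℝ (Fin n)) : fstar ≤ f x :=
    sub_nonneg.1 ((by positivity : 0 ≤ μ / 2 * ‖x - P x‖ ^ 2).trans (hQG x))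
  have hcycle (m : ℕ) : f (y (m + 1)) - fstar ≤ 3 / 4 * (f (y m) - fstar) := by
    have hcg : NemirovskiCG f L (z m) (q m) (xhat m) :=
      ⟨hq0 m, hhatmem m, hhatmin m, hstep m, hqrec m⟩
    rw [hrestart, ← hz0 m]
    exact hcg.sub_le_three_quarters_mul hdiff hL hsmooth hμ hα.1 hlow (hwqc (y m))
      (hz0 m ▸ hQG (y m)) (hT ▸ Nat.le_ceil _)
  have hrate (m : ℕ) : f (y m) - fstar ≤ (3 / 4) ^ m * (f x0 - fstar) := by
    simpa [hy0] using le_geom (u := fun m => f (y m) - fstar) (by norm_num) m fun k _ => hcycle k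
  refine ⟨hrate, fun ε hε => (hrate _).trans ?_⟩
  have hpow := inv_pow_ceil_logb_le (by norm_num : (1 : ℝ) < 4 / 3) hε
  rw [show ((4 : ℝ) / 3)⁻¹ = 3 / 4 by norm_num] at hpow
  exact mul_le_mul_of_nonneg_right hpow (sub_nonneg.2 (hlow x0))

theorem nemirovski_cg_restart_convergence
    (n : ℕ) (f : EuclideanSpace ℝ (Fin n) → ℝ)
    (hdiff : Differentiable ℝ f)
    (L : ℝ) (hL : 0 < L)
    (hsmooth : ∀ x y : EuclideanSpace ℝ (Fin n),
      ‖gradient f y - gradient f x‖ ≤ L * ‖y - x‖)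
    (Xstar : Set (EuclideanSpace ℝ (Fin n)))
    (hXstar : Xstar = {z | ∀ y, f z ≤ f y})
    (hne : Xstar.Nonempty)
    (fstar : ℝ) (hfstar : ∀ z ∈ Xstar, f z = fstar)
    -- P is the projection onto the solution set
    (P : EuclideanSpace ℝ (Fin n) → EuclideanSpace ℝ (Fin n))
    (hPmem : ∀ x, P x ∈ Xstar)
    (hPproj : ∀ x, ∀ z ∈ Xstar, ‖x - P x‖ ≤ ‖x - z‖)
    -- quadratic growth
    (μ : ℝ) (hμ : 0 < μ)
    (hQG : ∀ x, f x - fstar ≥ μ / 2 * ‖x - P x‖ ^ 2)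
    -- α-weak-quasi-convexity with respect to P x for every x
    (α : ℝ) (hα : α ∈ Set.Ioc (0 : ℝ) 1)
    (hwqc : ∀ x z : EuclideanSpace ℝ (Fin n),
      α * (f z - fstar) ≤ ⟪gradient f z, z - P x⟫)
    -- number of iterations per cycle
    (T : ℕ) (hT : T = ⌈(4 / (3 * α)) * Real.sqrt (L / μ)⌉₊)
    -- the sequence of restart points, y (m+1) obtained from y m by one
    -- cycle of T iterations of Nemirovski's conjugate gradients method
    (x0 : EuclideanSpace ℝ (Fin n))
    (y : ℕ → EuclideanSpace ℝ (Fin n)) (hy0 : y 0 = x0)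
    (z q xhat : ℕ → ℕ → EuclideanSpace ℝ (Fin n))
    (hz0 : ∀ m : ℕ, z m 0 = y m)
    (hq0 : ∀ m : ℕ, q m 0 = 0)
    (hhatmem : ∀ (m k : ℕ), ∃ a b : ℝ,
      xhat m k = z m 0 + a • (z m k - z m 0) + b • q m k)
    (hhatmin : ∀ (m k : ℕ) (a b : ℝ),
      f (xhat m k) ≤ f (z m 0 + a • (z m k - z m 0) + b • q m k))
    (hstep : ∀ m k : ℕ, z m (k + 1) = xhat m k - (1 / L) • gradient f (xhat m k))
    (hqrec : ∀ m k : ℕ, q m (k + 1) = q m k + gradient f (xhat m k))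
    (hrestart : ∀ m : ℕ, y (m + 1) = z m T) :
    (∀ m : ℕ, f (y m) - fstar ≤ (3 / 4) ^ m * (f x0 - fstar)) ∧
      ∀ ε : ℝ, 0 < ε →
        f (y ⌈Real.logb (4 / 3) (1 / ε)⌉₊) - fstar ≤ ε * (f x0 - fstar) :=
  nemirovski_cg_restart_convergence_general n f hdiff L hL hsmooth fstar P μ hμ hQG α hα hwqc T hT
    x0 y hy0 z q xhat hz0 hq0 hhatmem hhatmin hstep hqrec hrestart
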